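/- arXiv:1812.11406 — 4 statements merged into one kernel-verified Lean document; each statement's English description precedes it below -/
import Mathlib

section
/- Let M be an m×n complex matrix with singular value decomposition M = Σ_{j=1}^{min(m,n)} σ_j(M) u_j v_jᴴ, where σ_1(M) ≥ σ_2(M) ≥ … ≥ 0 and (u_j), (v_j) are orthonormal families in ℂ^m and ℂ^n, and let ρ be an integer with 1 ≤ ρ < min(m,n). Then the ρ-truncation M_ρ = Σ_{j=1}^{ρ} σ_j(M) u_j v_jᴴ satisfies ‖M − M_ρ‖ = σ_{ρ+1}(M), and for every m×n complex matrix N of rank at most ρ one has ‖M − N‖ ≥ σ_{ρ+1}(M), where ‖·‖ denotes the spectral norm; that is, M_ρ is a closest rank-ρ approximation of M in the spectral norm. -/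
/-!
Indices start at `0`, so `σ_ρ` is the paper's `σ_{ρ+1}`. Both bounds rest on Pythagoras for the
orthonormal `uⱼ`: `‖∑ⱼ σⱼ ⟪vⱼ, x⟫ uⱼ‖² = ∑ⱼ σⱼ² |⟪vⱼ, x⟫|²`. On the tail `j ≥ ρ` all
`σⱼ ≤ σ_ρ`, so Bessel's inequality gives `‖M - M_ρ‖ ≤ σ_ρ`, attained at `x = v_ρ`. If `N` has
rank at most `ρ`, rank–nullity yields `w ≠ 0` in `span {v₀, …, v_ρ}` with `N w = 0`; there all
weights are `≥ σ_ρ` and the `⟪vⱼ, w⟫` carry the whole norm of `w`, so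
`‖(M - N) w‖ = ‖M w‖ ≥ σ_ρ ‖w‖`.
-/

noncomputable def matrixSpectralNorm {m n : ℕ} (A : Matrix (Fin m) (Fin n) ℂ) : ℝ :=
  ‖LinearMap.toContinuousLinearMap (Matrix.toEuclideanLin A)‖

open Module Finset
open scoped InnerProductSpace

section Orthonormal

variable {𝕜 E F ι : Type*} [RCLike 𝕜]
  [NormedAddCommGroup E] [InnerProductSpace 𝕜 E] [NormedAddCommGroup F] [InnerProductSpace 𝕜 F]
  {u : ι → F} {v : ι → E}

theorem Orthonormal.norm_sum_smul_sq (hu : Orthonormal 𝕜 u) (c : ι → 𝕜) (s : Finset ι) :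
    ‖∑ j ∈ s, c j • u j‖ ^ 2 = ∑ j ∈ s, ‖c j‖ ^ 2 := by
  rw [@norm_sq_eq_re_inner 𝕜, hu.inner_sum]
  simp only [RCLike.conj_mul, map_sum]
  norm_cast

theorem Orthonormal.sum_inner_smul_eq_self_of_mem_span (hv : Orthonormal 𝕜 v)
    {t : Finset ι} {x : E} (hx : x ∈ Submodule.span 𝕜 (v '' t)) :
    ∑ j ∈ t, ⟪v j, x⟫_𝕜 • v j = x := by
  classical
  induction hx using Submodule.span_induction with
  | mem _ hx =>
    obtain ⟨i, hi, rfl⟩ := hx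
    simp [orthonormal_iff_ite.mp hv, Finset.mem_coe.mp hi]
  | zero => simp
  | add x y _ _ hx hy => simp only [inner_add_right, add_smul, sum_add_distrib, hx, hy]
  | smul a x _ hx => simp only [inner_smul_right, mul_smul, ← smul_sum, hx]

theorem Orthonormal.norm_sum_mul_inner_smul_sq (hu : Orthonormal 𝕜 u) (σ : ι → 𝕜)
    (s : Finset ι) (x : E) :
    ‖∑ j ∈ s, (σ j * ⟪v j, x⟫_𝕜) • u j‖ ^ 2 = ∑ j ∈ s, ‖σ j‖ ^ 2 * ‖⟪v j, x⟫_𝕜‖ ^ 2 := by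
  simp only [hu.norm_sum_smul_sq, norm_mul, mul_pow]

theorem Orthonormal.norm_sum_mul_inner_smul_le (hu : Orthonormal 𝕜 u) (hv : Orthonormal 𝕜 v)
    {σ : ι → 𝕜} {s : Finset ι} {c : ℝ} (hc : 0 ≤ c) (hσ : ∀ j ∈ s, ‖σ j‖ ≤ c) (x : E) :
    ‖∑ j ∈ s, (σ j * ⟪v j, x⟫_𝕜) • u j‖ ≤ c * ‖x‖ := by
  refine (pow_le_pow_iff_left₀ (norm_nonneg _) (by positivity) two_ne_zero).mp ?_
  calc ‖∑ j ∈ s, (σ j * ⟪v j, x⟫_𝕜) • u j‖ ^ 2 = ∑ j ∈ s, ‖σ j‖ ^ 2 * ‖⟪v j, x⟫_𝕜‖ ^ 2 :=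
        hu.norm_sum_mul_inner_smul_sq σ s x
    _ ≤ ∑ j ∈ s, c ^ 2 * ‖⟪v j, x⟫_𝕜‖ ^ 2 := by
        gcongr with j hj
        exact hσ j hj
    _ = c ^ 2 * ∑ j ∈ s, ‖⟪v j, x⟫_𝕜‖ ^ 2 := (mul_sum _ _ _).symm
    _ ≤ c ^ 2 * ‖x‖ ^ 2 := by
        gcongr
        exact hv.sum_inner_products_le x
    _ = (c * ‖x‖) ^ 2 := (mul_pow _ _ _).symm

theorem Orthonormal.mul_norm_le_norm_sum_mul_inner_smul (hu : Orthonormal 𝕜 u)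
    (hv : Orthonormal 𝕜 v) {σ : ι → 𝕜} {s t : Finset ι} {c : ℝ} (hc : 0 ≤ c) (hts : t ⊆ s)
    (hσ : ∀ j ∈ t, c ≤ ‖σ j‖) {x : E} (hx : x ∈ Submodule.span 𝕜 (v '' t)) :
    c * ‖x‖ ≤ ‖∑ j ∈ s, (σ j * ⟪v j, x⟫_𝕜) • u j‖ := by
  have hnorm : ‖x‖ ^ 2 = ∑ j ∈ t, ‖⟪v j, x⟫_𝕜‖ ^ 2 := by
    conv_lhs => rw [← hv.sum_inner_smul_eq_self_of_mem_span hx]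
    exact hv.norm_sum_smul_sq _ t
  refine (pow_le_pow_iff_left₀ (by positivity) (norm_nonneg _) two_ne_zero).mp ?_
  calc (c * ‖x‖) ^ 2 = ∑ j ∈ t, c ^ 2 * ‖⟪v j, x⟫_𝕜‖ ^ 2 := by rw [mul_pow, hnorm, mul_sum]
    _ ≤ ∑ j ∈ t, ‖σ j‖ ^ 2 * ‖⟪v j, x⟫_𝕜‖ ^ 2 := by
        gcongr with j hj
        exact hσ j hj
    _ ≤ ∑ j ∈ s, ‖σ j‖ ^ 2 * ‖⟪v j, x⟫_𝕜‖ ^ 2 :=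
        sum_le_sum_of_subset_of_nonneg hts fun _ _ _ => by positivity
    _ = ‖∑ j ∈ s, (σ j * ⟪v j, x⟫_𝕜) • u j‖ ^ 2 := (hu.norm_sum_mul_inner_smul_sq σ s x).symm

theorem Orthonormal.finrank_span_image (hv : Orthonormal 𝕜 v) (t : Finset ι) :
    finrank 𝕜 (Submodule.span 𝕜 (v '' t)) = #t := by
  have := finrank_span_eq_card (hv.linearIndependent.comp ((↑) : ↥(t : Set ι) → ι)
    Subtype.val_injective)
  rw [Set.range_comp, Subtype.range_coe] at this
  simpa using this

end Orthonormal

theorem LinearMap.exists_mem_ne_zero_apply_eq_zero_of_finrank_range_lt {K V V₂ : Type*}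
    [DivisionRing K] [AddCommGroup V] [Module K V] [AddCommGroup V₂] [Module K V₂]
    [FiniteDimensional K V] (f : V →ₗ[K] V₂) {W : Submodule K V}
    (h : finrank K (range f) < finrank K W) : ∃ w ∈ W, w ≠ 0 ∧ f w = 0 := by
  have hker : ker (f.domRestrict W) ≠ ⊥ := by
    intro hbot
    have hrank := (f.domRestrict W).finrank_range_add_finrank_ker
    have hle := Submodule.finrank_mono (f.range_domRestrict_le_range W)
    rw [hbot, finrank_bot] at hrank
    omega
  obtain ⟨w, hw, hw0⟩ := Submodule.exists_mem_ne_zero_of_ne_bot hker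
  exact ⟨w, w.2, by simpa using hw0, hw⟩

section Matrix

variable {𝕜 m n ι : Type*} [RCLike 𝕜] [Fintype n]

theorem orthonormal_toLp_iff [DecidableEq ι] {v : ι → n → 𝕜} :
    Orthonormal 𝕜 (fun j => WithLp.toLp 2 (v j)) ↔
      ∀ j j', ∑ k, starRingEnd 𝕜 (v j k) * v j' k = if j = j' then 1 else 0 := by
  simp [orthonormal_iff_ite, PiLp.inner_apply, RCLike.inner_apply, mul_comm]

theorem Matrix.toEuclideanLin_of_mul_mul_conj [DecidableEq n] (a : 𝕜) (x : m → 𝕜) (y : n → 𝕜)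
    (z : EuclideanSpace 𝕜 n) :
    toEuclideanLin (of fun i k => a * x i * starRingEnd 𝕜 (y k)) z
      = (a * ⟪WithLp.toLp 2 y, z⟫_𝕜) • WithLp.toLp 2 x := by
  ext i
  simp only [ofLp_toLpLin, toLin'_apply, mulVec, dotProduct, of_apply, PiLp.inner_apply,
    RCLike.inner_apply, PiLp.smul_apply, smul_eq_mul, mul_sum, sum_mul]
  exact sum_congr rfl fun k _ => by ring

theorem Matrix.toEuclideanLin_sum_of_mul_mul_conj [DecidableEq n] (σ : ι → 𝕜)
    (u : ι → m → 𝕜) (v : ι → n → 𝕜) (s : Finset ι) (z : EuclideanSpace 𝕜 n) :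
    toEuclideanLin (∑ j ∈ s, of fun i k => σ j * u j i * starRingEnd 𝕜 (v j k)) z
      = ∑ j ∈ s, (σ j * ⟪WithLp.toLp 2 (v j), z⟫_𝕜) • WithLp.toLp 2 (u j) := by
  simp only [map_sum, LinearMap.sum_apply, toEuclideanLin_of_mul_mul_conj]

theorem Matrix.rank_eq_finrank_range_toEuclideanLin [Fintype m] [DecidableEq n]
    (A : Matrix m n 𝕜) : A.rank = finrank 𝕜 (LinearMap.range (toEuclideanLin A)) := by
  rw [toEuclideanLin_eq_toLin_orthonormal]
  exact rank_eq_finrank_range_toLin A _ _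

end Matrix

theorem matrixSpectralNorm_le {m n : ℕ} {A : Matrix (Fin m) (Fin n) ℂ} {c : ℝ} (hc : 0 ≤ c)
    (h : ∀ x, ‖Matrix.toEuclideanLin A x‖ ≤ c * ‖x‖) : matrixSpectralNorm A ≤ c :=
  ContinuousLinearMap.opNorm_le_bound _ hc h

theorem le_matrixSpectralNorm {m n : ℕ} {A : Matrix (Fin m) (Fin n) ℂ} {c : ℝ}
    {x : EuclideanSpace ℂ (Fin n)} (hx : x ≠ 0) (h : c * ‖x‖ ≤ ‖Matrix.toEuclideanLin A x‖) :
    c ≤ matrixSpectralNorm A :=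
  le_of_mul_le_mul_right (h.trans ((LinearMap.toContinuousLinearMap _).le_opNorm x))
    (norm_pos_iff.mpr hx)

theorem truncated_svd_is_best_spectral_approx_general {m n ρ : ℕ} (hρ : ρ < min m n)
    (M : Matrix (Fin m) (Fin n) ℂ)
    (σ : Fin (min m n) → ℝ)
    (u : Fin (min m n) → Fin m → ℂ) (v : Fin (min m n) → Fin n → ℂ)
    (hmono : ∀ i j : Fin (min m n), i ≤ j → σ j ≤ σ i)
    (hnonneg : ∀ j, 0 ≤ σ j)
    (hu : ∀ j j' : Fin (min m n),
      ∑ i, (starRingEnd ℂ) (u j i) * u j' i = if j = j' then 1 else 0)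
    (hv : ∀ j j' : Fin (min m n),
      ∑ k, (starRingEnd ℂ) (v j k) * v j' k = if j = j' then 1 else 0)
    (hM : M = ∑ j : Fin (min m n),
      Matrix.of fun i k => (σ j : ℂ) * u j i * (starRingEnd ℂ) (v j k))
    (Mρ : Matrix (Fin m) (Fin n) ℂ)
    (hMρ : Mρ = ∑ j ∈ Finset.univ.filter (fun j : Fin (min m n) => (j : ℕ) < ρ),
      Matrix.of fun i k => (σ j : ℂ) * u j i * (starRingEnd ℂ) (v j k)) :
    matrixSpectralNorm (M - Mρ) = σ ⟨ρ, hρ⟩ ∧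
      ∀ N : Matrix (Fin m) (Fin n) ℂ, N.rank ≤ ρ →
        σ ⟨ρ, hρ⟩ ≤ matrixSpectralNorm (M - N) := by
  have hU := orthonormal_toLp_iff.mpr hu
  have hV := orthonormal_toLp_iff.mpr hv
  set r : Fin (min m n) := ⟨ρ, hρ⟩
  have hσ (j) : ‖(σ j : ℂ)‖ = σ j := Complex.norm_of_nonneg (hnonneg j)
  set tail := univ.filter fun j : Fin (min m n) => ¬ (j : ℕ) < ρ
  have htail : M - Mρ = ∑ j ∈ tail,
      Matrix.of fun i k => (σ j : ℂ) * u j i * (starRingEnd ℂ) (v j k) := by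
    rw [hM, hMρ, sub_eq_iff_eq_add', sum_filter_add_sum_filter_not]
  refine ⟨le_antisymm ?_ ?_, fun N hN => ?_⟩
  · refine matrixSpectralNorm_le (hnonneg r) fun x => ?_
    rw [htail, Matrix.toEuclideanLin_sum_of_mul_mul_conj]
    refine hU.norm_sum_mul_inner_smul_le hV (hnonneg r) (fun j hj => ?_) x
    rw [hσ]
    exact hmono r j (Fin.le_def.mpr (not_lt.mp (mem_filter.mp hj).2))
  · refine le_matrixSpectralNorm (hV.ne_zero r) ?_
    rw [htail, Matrix.toEuclideanLin_sum_of_mul_mul_conj]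
    refine hU.mul_norm_le_norm_sum_mul_inner_smul hV (hnonneg r) (t := {r}) (by simp [tail, r])
      (fun j hj => by rw [mem_singleton.mp hj, hσ]) (Submodule.subset_span (by simp))
  · obtain ⟨w, hwW, hw0, hNw⟩ :=
      (Matrix.toEuclideanLin N).exists_mem_ne_zero_apply_eq_zero_of_finrank_range_lt
        (W := Submodule.span ℂ ((fun j => WithLp.toLp 2 (v j)) '' Iic r))
        (by rw [← N.rank_eq_finrank_range_toEuclideanLin, hV.finrank_span_image, Fin.card_Iic]
            exact Nat.lt_succ_of_le hN)
    refine le_matrixSpectralNorm hw0 ?_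
    rw [map_sub, LinearMap.sub_apply, hNw, sub_zero, hM, Matrix.toEuclideanLin_sum_of_mul_mul_conj]
    exact hU.mul_norm_le_norm_sum_mul_inner_smul hV (hnonneg r) (subset_univ _)
      (fun j hj => by rw [hσ]; exact hmono j r (mem_Iic.mp hj)) hwW

/-- **Eckart–Young in the spectral norm.**  If `M = ∑ σ_j u_j v_jᴴ` is a singular value
decomposition of an `m×n` complex matrix with nonincreasing nonnegative `σ` and orthonormal
families `u`, `v`, and `1 ≤ ρ < min m n`, then the ρ-truncation `Mρ = ∑_{j<ρ} σ_j u_j v_jᴴ`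
satisfies `‖M − Mρ‖ = σ_{ρ+1}` and every matrix `N` of rank at most `ρ` satisfies
`‖M − N‖ ≥ σ_{ρ+1}` (0-based: the singular value with index `ρ`). -/
theorem truncated_svd_is_best_spectral_approx {m n ρ : ℕ} (hρ1 : 1 ≤ ρ) (hρ : ρ < min m n)
    (M : Matrix (Fin m) (Fin n) ℂ)
    (σ : Fin (min m n) → ℝ)
    (u : Fin (min m n) → Fin m → ℂ) (v : Fin (min m n) → Fin n → ℂ)
    (hmono : ∀ i j : Fin (min m n), i ≤ j → σ j ≤ σ i)
    (hnonneg : ∀ j, 0 ≤ σ j)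
    (hu : ∀ j j' : Fin (min m n),
      ∑ i, (starRingEnd ℂ) (u j i) * u j' i = if j = j' then 1 else 0)
    (hv : ∀ j j' : Fin (min m n),
      ∑ k, (starRingEnd ℂ) (v j k) * v j' k = if j = j' then 1 else 0)
    (hM : M = ∑ j : Fin (min m n),
      Matrix.of fun i k => (σ j : ℂ) * u j i * (starRingEnd ℂ) (v j k))
    (Mρ : Matrix (Fin m) (Fin n) ℂ)
    (hMρ : Mρ = ∑ j ∈ Finset.univ.filter (fun j : Fin (min m n) => (j : ℕ) < ρ),
      Matrix.of fun i k => (σ j : ℂ) * u j i * (starRingEnd ℂ) (v j k)) :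
    matrixSpectralNorm (M - Mρ) = σ ⟨ρ, hρ⟩ ∧
      ∀ N : Matrix (Fin m) (Fin n) ℂ, N.rank ≤ ρ →
        σ ⟨ρ, hρ⟩ ≤ matrixSpectralNorm (M - N) :=
  truncated_svd_is_best_spectral_approx_general hρ M σ u v hmono hnonneg hu hv hM Mρ hMρ
end

section
/- Let M be an m×n complex matrix of rank ρ > 0, let I be a set of ρ row indices and J a set of ρ column indices such that the ρ×ρ submatrix G = M(I,J) is nonsingular, and set C = M(:,J) ∈ ℂ^{m×ρ} and R = M(I,:) ∈ ℂ^{ρ×n}. Then M = C·G⁻¹·R. -/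
open Matrix

/-- **CUR decomposition with a nonsingular ρ×ρ generator.**  Let `M` be an `m×n` complex
matrix of rank `ρ > 0`, let `C`, `R`, `G` be the submatrices of `M` given by a set of `ρ`
columns, a set of `ρ` rows, and their common entries, respectively.  If `G` is nonsingular,
then `M = C * G⁻¹ * R`. -/
theorem cur_decomposition_of_nonsingular_generator {m n ρ : ℕ}
    (M : Matrix (Fin m) (Fin n) ℂ)
    (hrank : M.rank = ρ) (hρ : 0 < ρ)
    (rowIdx : Fin ρ → Fin m) (colIdx : Fin ρ → Fin n)
    (hrow : Function.Injective rowIdx) (hcol : Function.Injective colIdx)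
    (C : Matrix (Fin m) (Fin ρ) ℂ) (hC : C = M.submatrix id colIdx)
    (R : Matrix (Fin ρ) (Fin n) ℂ) (hR : R = M.submatrix rowIdx id)
    (G : Matrix (Fin ρ) (Fin ρ) ℂ) (hG : G = M.submatrix rowIdx colIdx)
    (hGns : IsUnit G.det) :
    M = C * G⁻¹ * R := by
  haveI : Nonempty (Fin ρ) := ⟨⟨0, hρ⟩⟩
  have hGunit : IsUnit G := (Matrix.isUnit_iff_isUnit_det G).2 hGns
  -- row space
  set S : Submodule ℂ (Fin n → ℂ) := Submodule.span ℂ (Set.range M) with hS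
  have hfin : Module.finrank ℂ S = ρ := by
    have := M.rank_eq_finrank_span_row
    rw [hrank] at this
    exact this.symm
  -- rows of G are linearly independent
  have hGLI : LinearIndependent ℂ (fun k => G k) := linearIndependent_rows_iff_isUnit.2 hGunit
  -- the selected rows of M are linearly independent
  have hvLI : LinearIndependent ℂ (fun k => M (rowIdx k)) := by
    have hcomp : (fun k => (LinearMap.funLeft ℂ ℂ colIdx) (M (rowIdx k))) = fun k => G k := by
      funext k; funext l; simp [hG, LinearMap.funLeft, Matrix.submatrix]
    refine LinearIndependent.of_comp (LinearMap.funLeft ℂ ℂ colIdx) ?_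
    rw [show ((LinearMap.funLeft ℂ ℂ colIdx) ∘ fun k => M (rowIdx k))
        = fun k => G k from hcomp]
    exact hGLI
  -- as elements of S
  have hmem : ∀ i : Fin m, M i ∈ S := fun i => Submodule.subset_span ⟨i, rfl⟩
  set b : Fin ρ → S := fun k => ⟨M (rowIdx k), hmem _⟩ with hb
  have hbLI : LinearIndependent ℂ b := by
    apply LinearIndependent.of_comp S.subtype
    exact hvLI
  have hcard : Fintype.card (Fin ρ) = Module.finrank ℂ S := by simp [hfin]
  let basis := basisOfLinearIndependentOfCardEqFinrank hbLI hcard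
  have hbasis : ⇑basis = b := coe_basisOfLinearIndependentOfCardEqFinrank hbLI hcard
  -- coefficient matrix
  set A : Matrix (Fin m) (Fin ρ) ℂ := fun i k => basis.repr ⟨M i, hmem i⟩ k with hA
  have hMA : ∀ i : Fin m, M i = ∑ k, A i k • M (rowIdx k) := by
    intro i
    have := basis.sum_repr ⟨M i, hmem i⟩
    have h2 := congrArg (S.subtype) this
    simp only [map_sum, _root_.map_smul] at h2
    rw [hbasis] at h2
    simpa [hA, hb] using h2.symm
  have hMAR : M = A * R := by
    ext i j
    rw [Matrix.mul_apply]
    have := congrFun (hMA i) j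
    simpa [hR, Finset.sum_apply] using this
  have hCAG : C = A * G := by
    ext i l
    rw [Matrix.mul_apply]
    have := congrFun (hMA i) (colIdx l)
    simpa [hC, hG, Finset.sum_apply] using this
  rw [hCAG, Matrix.mul_assoc A G G⁻¹, Matrix.mul_nonsing_inv G hGns, Matrix.mul_one]
  exact hMAR
end

section
/- Let m, n ≥ 2 and for each position (p,q) ∈ {1,…,m}×{1,…,n} define the dense matrix W_{pq} = E_{pq} − (1/2)·J, where E_{pq} is the δ-matrix with 1 at position (p,q) and J is the m×n matrix with every entry equal to 1. Then every W_{pq} has rank exactly 2, and for any set S ⊆ {1,…,m}×{1,…,n} and any function Φ from m×n real matrices to m×n real matrices that depends only on the entries in S, at most one position (p,q) ∉ S satisfies ‖Φ(W_{pq}) − W_{pq}‖_max < 1/2; consequently at least (mn − |S|) − 1 of the matrices W_{pq} with (p,q) ∉ S satisfy ‖Φ(W_{pq}) − W_{pq}‖_max ≥ 1/2. -/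
/-!
`W_{pq} = e_p e_qᵀ - ½ 𝟙𝟙ᵀ` is a sum of two rank-one matrices, and its `2 × 2` minor on rows
`p, p'` and columns `q, q'` is `[[½, -½], [-½, -½]]`, which is nonsingular; so its rank is `2`.
For positions `a ≠ b` outside `S`, the matrices `W_a` and `W_b` both equal `-½` on `S`, so `Φ`
returns the same matrix on both. Since `W_a` and `W_b` differ by `1` at position `a`, that matrix
cannot be within `½` of both of them in the max norm.
-/

/-- The entrywise maximum norm of a real matrix, `‖A‖_max = max_{i,j} |a_{ij}|`. -/
noncomputable def maxNorm {m n : ℕ} (A : Matrix (Fin m) (Fin n) ℝ) : ℝ :=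
  ⨆ i, ⨆ j, |A i j|

/-- The dense rank-2 matrix `W_{pq} = E_{pq} − (1/2)·J`, where `E_{pq}` is the δ-matrix
with a `1` at position `(p,q)` and `J` is the all-ones matrix. -/
noncomputable def Wmat {m n : ℕ} (p : Fin m) (q : Fin n) : Matrix (Fin m) (Fin n) ℝ :=
  Matrix.single p q (1 : ℝ) - (1 / 2 : ℝ) • Matrix.of fun _ _ => (1 : ℝ)

theorem Finset.card_compl_sub_one_le_ncard_of_subsingleton {α : Type*} [Fintype α]
    (S : Finset α) (P : α → Prop) (hP : {x | x ∉ S ∧ P x}.Subsingleton) :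
    Fintype.card α - S.card - 1 ≤ {x | x ∉ S ∧ ¬ P x}.ncard := by
  have hunion : {x | x ∉ S ∧ P x} ∪ {x | x ∉ S ∧ ¬ P x} = (↑S : Set α)ᶜ := by
    ext x; by_cases P x <;> simp [*]
  have hcompl : ((↑S : Set α)ᶜ).ncard = Fintype.card α - S.card := by
    classical
    rw [← Finset.coe_compl, Set.ncard_coe_finset, Finset.card_compl]
  have hsplit := hunion ▸ Set.ncard_union_le {x | x ∉ S ∧ P x} {x | x ∉ S ∧ ¬ P x}
  have hsmall := (Set.ncard_le_one_iff_subsingleton).mpr hP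
  omega

theorem Matrix.rank_add_le {K m n : Type*} [Field K] [Fintype n] (A B : Matrix m n K) :
    (A + B).rank ≤ A.rank + B.rank := by
  unfold Matrix.rank
  rw [Matrix.mulVecLin_add]
  exact (Submodule.finrank_mono (LinearMap.range_add_le _ _)).trans
    (Submodule.finrank_add_le_finrank_add_finrank _ _)

theorem abs_apply_le_maxNorm {m n : ℕ} (A : Matrix (Fin m) (Fin n) ℝ) (i : Fin m) (j : Fin n) :
    |A i j| ≤ maxNorm A :=
  (le_ciSup (Set.finite_range _).bddAbove j).trans
    (le_ciSup (f := fun i => ⨆ j, |A i j|) (Set.finite_range _).bddAbove i)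

theorem abs_sub_apply_le_maxNorm_add {m n : ℕ} (X A B : Matrix (Fin m) (Fin n) ℝ)
    (i : Fin m) (j : Fin n) : |A i j - B i j| ≤ maxNorm (X - A) + maxNorm (X - B) :=
  calc |A i j - B i j| ≤ |(X - A) i j| + |(X - B) i j| := by
        simpa [abs_sub_comm] using abs_sub_le (A i j) (X i j) (B i j)
    _ ≤ maxNorm (X - A) + maxNorm (X - B) :=
        add_le_add (abs_apply_le_maxNorm _ i j) (abs_apply_le_maxNorm _ i j)

theorem Wmat_apply {m n : ℕ} (p : Fin m) (q : Fin n) (i : Fin m) (j : Fin n) :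
    Wmat p q i j = (if (p, q) = (i, j) then 1 else 0) - 1 / 2 := by
  simp [Wmat, Matrix.single_apply]

theorem Wmat_apply_self {m n : ℕ} (p : Fin m) (q : Fin n) : Wmat p q p q = 1 / 2 := by
  norm_num [Wmat_apply]

theorem Wmat_apply_of_ne {m n : ℕ} {p i : Fin m} {q j : Fin n} (h : (p, q) ≠ (i, j)) :
    Wmat p q i j = -(1 / 2) := by
  rw [Wmat_apply, if_neg h, zero_sub]

theorem Wmat_eq_add_vecMulVec {m n : ℕ} (p : Fin m) (q : Fin n) :
    Wmat p q = Matrix.vecMulVec (Pi.single p 1) (Pi.single q 1) +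
      Matrix.vecMulVec (fun _ => -(1 / 2)) (fun _ => 1) := by
  ext i j
  rw [Wmat_apply, Matrix.add_apply, Matrix.vecMulVec_apply, Matrix.vecMulVec_apply]
  by_cases hi : p = i <;> by_cases hj : q = j <;> simp [hi, hj, eq_comm, sub_eq_add_neg]

theorem rank_Wmat_le {m n : ℕ} (p : Fin m) (q : Fin n) : (Wmat p q).rank ≤ 2 := by
  rw [Wmat_eq_add_vecMulVec]
  exact (Matrix.rank_add_le _ _).trans
    (add_le_add (Matrix.rank_vecMulVec_le _ _) (Matrix.rank_vecMulVec_le _ _))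

theorem le_rank_Wmat {m n : ℕ} {p p' : Fin m} {q q' : Fin n} (hp : p ≠ p') (hq : q ≠ q') :
    2 ≤ (Wmat p q).rank := by
  have hdet : ((Wmat p q).submatrix ![p, p'] ![q, q']).det ≠ 0 := by
    rw [Matrix.det_fin_two]
    norm_num [Wmat_apply_self, Wmat_apply_of_ne, hp, hq]
  calc 2 = ((Wmat p q).submatrix ![p, p'] ![q, q']).rank := by
        rw [Matrix.rank_of_det_ne_zero hdet, Fintype.card_fin]
    _ ≤ (Wmat p q).rank := Matrix.rank_submatrix_le _ _ _

theorem rank_Wmat {m n : ℕ} (hm : 2 ≤ m) (hn : 2 ≤ n) (p : Fin m) (q : Fin n) :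
    (Wmat p q).rank = 2 := by
  have : Nontrivial (Fin m) := Fin.nontrivial_iff_two_le.mpr hm
  have : Nontrivial (Fin n) := Fin.nontrivial_iff_two_le.mpr hn
  obtain ⟨p', hp'⟩ := exists_ne p
  obtain ⟨q', hq'⟩ := exists_ne q
  exact (rank_Wmat_le p q).antisymm (le_rank_Wmat hp'.symm hq'.symm)

theorem Wmat_apply_eq_of_notMem {m n : ℕ} {S : Finset (Fin m × Fin n)} {a b : Fin m × Fin n}
    (ha : a ∉ S) (hb : b ∉ S) :
    ∀ pq ∈ S, Wmat a.1 a.2 pq.1 pq.2 = Wmat b.1 b.2 pq.1 pq.2 := fun pq hpq => by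
  rw [Wmat_apply_of_ne (ne_of_mem_of_not_mem hpq ha).symm,
    Wmat_apply_of_ne (ne_of_mem_of_not_mem hpq hb).symm]

theorem subsingleton_setOf_maxNorm_sub_Wmat_lt {m n : ℕ} (S : Finset (Fin m × Fin n))
    (Φ : Matrix (Fin m) (Fin n) ℝ → Matrix (Fin m) (Fin n) ℝ)
    (hΦ : ∀ A B : Matrix (Fin m) (Fin n) ℝ,
      (∀ pq ∈ S, A pq.1 pq.2 = B pq.1 pq.2) → Φ A = Φ B) :
    {pq : Fin m × Fin n | pq ∉ S ∧
      maxNorm (Φ (Wmat pq.1 pq.2) - Wmat pq.1 pq.2) < 1 / 2}.Subsingleton := by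
  rintro a ⟨haS, ha⟩ b ⟨hbS, hb⟩
  by_contra hab
  rw [← hΦ _ _ (Wmat_apply_eq_of_notMem haS hbS)] at hb
  have key := abs_sub_apply_le_maxNorm_add (Φ (Wmat a.1 a.2)) (Wmat a.1 a.2)
    (Wmat b.1 b.2) a.1 a.2
  rw [Wmat_apply_self, Wmat_apply_of_ne (Ne.symm hab)] at key
  norm_num at key
  linarith

/-- **Any algorithm reading only the entries in `S` fails on almost all of the dense rank-2
matrices `W_{pq} = E_{pq} − (1/2)·J`.**  For `m, n ≥ 2` each `W_{pq}` has rank exactly `2`,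
and for any function `Φ` on `m×n` real matrices depending only on the entries indexed by the
finite set `S`, at most one position `(p,q) ∉ S` satisfies
`‖Φ(W_{pq}) − W_{pq}‖_max < 1/2`; consequently at least `(mn − |S|) − 1` of the matrices
`W_{pq}` with `(p,q) ∉ S` satisfy `‖Φ(W_{pq}) − W_{pq}‖_max ≥ 1/2`. -/
theorem adversary_dense_rank_two_matrices {m n : ℕ} (hm : 2 ≤ m) (hn : 2 ≤ n)
    (S : Finset (Fin m × Fin n))
    (Φ : Matrix (Fin m) (Fin n) ℝ → Matrix (Fin m) (Fin n) ℝ)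
    (hΦ : ∀ A B : Matrix (Fin m) (Fin n) ℝ,
      (∀ pq ∈ S, A pq.1 pq.2 = B pq.1 pq.2) → Φ A = Φ B) :
    (∀ (p : Fin m) (q : Fin n), (Wmat p q).rank = 2) ∧
    ({pq : Fin m × Fin n | pq ∉ S ∧
        maxNorm (Φ (Wmat pq.1 pq.2) - Wmat pq.1 pq.2) < 1 / 2} : Set _).Subsingleton ∧
    m * n - S.card - 1 ≤
      ({pq : Fin m × Fin n | pq ∉ S ∧
        1 / 2 ≤ maxNorm (Φ (Wmat pq.1 pq.2) - Wmat pq.1 pq.2)} : Set _).ncard := by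
  have hfew := subsingleton_setOf_maxNorm_sub_Wmat_lt S Φ hΦ
  refine ⟨rank_Wmat hm hn, hfew, ?_⟩
  simpa only [Fintype.card_prod, Fintype.card_fin, not_lt] using
    Finset.card_compl_sub_one_le_ncard_of_subsingleton S _ hfew
end

section
/- Let M be an m×n complex matrix, let I be a set of k row indices and J a set of l column indices, and set C = M(:,J) ∈ ℂ^{m×l}, R = M(I,:) ∈ ℂ^{k×n}, and G = M(I,J) ∈ ℂ^{k×l}. If rank(G) = rank(M), then for every l×k complex matrix X satisfying G·X·G = G (a generalized inverse of G), one has M = C·X·R. -/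
/-!
Since `G` is a submatrix of both `C` and `R`, which are submatrices of `M`, the hypothesis
`rank G = rank M` forces `rank C = rank R = rank M`. Hence the columns of `C` span the column
space of `M` and the rows of `R` span its row space: `M = C * Y` and `M = Z * R`. Restricting
these factorizations gives `R = G * Y` and `C = Z * G`, so
`M = Z * R = Z * G * Y = Z * (G * X * G) * Y = C * X * R`.
-/

open Matrix

namespace Matrix

section CommSemiring

variable {R : Type*} [CommSemiring R] {m n p : Type*} [Fintype n] [Fintype p]

theorem exists_eq_mul_of_range_mulVecLin_le {A : Matrix m n R} {B : Matrix m p R}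
    (h : LinearMap.range A.mulVecLin ≤ LinearMap.range B.mulVecLin) :
    ∃ Y : Matrix p n R, A = B * Y := by
  have hcol : ∀ j, ∃ y : p → R, B *ᵥ y = A.col j := fun j =>
    h (by rw [range_mulVecLin]; exact Submodule.subset_span ⟨j, rfl⟩)
  choose y hy using hcol
  refine ⟨(of y)ᵀ, ?_⟩
  ext i j
  exact (congrFun (hy j) i).symm

theorem range_mulVecLin_submatrix_le (A : Matrix m n R) (c : p → n) :
    LinearMap.range (A.submatrix id c).mulVecLin ≤ LinearMap.range A.mulVecLin := by
  rw [range_mulVecLin, range_mulVecLin]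
  exact Submodule.span_mono fun _ ⟨j, hj⟩ => ⟨c j, hj⟩

end CommSemiring

section Field

variable {K : Type*} [Field K] {m n p : Type*} [Fintype n] [Fintype p]

theorem exists_eq_submatrix_mul_of_rank_le (A : Matrix m n K) (c : p → n)
    (h : A.rank ≤ (A.submatrix id c).rank) :
    ∃ Y : Matrix p n K, A = A.submatrix id c * Y :=
  exists_eq_mul_of_range_mulVecLin_le
    (Submodule.eq_of_le_of_finrank_le (range_mulVecLin_submatrix_le A c) h).ge

theorem exists_eq_mul_submatrix_of_rank_le [Fintype m] (A : Matrix m n K) (r : p → m)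
    (h : A.rank ≤ (A.submatrix r id).rank) :
    ∃ Z : Matrix m p K, A = Z * A.submatrix r id := by
  obtain ⟨Y, hY⟩ := exists_eq_submatrix_mul_of_rank_le Aᵀ r (by
    rwa [rank_transpose, ← transpose_submatrix, rank_transpose])
  refine ⟨Yᵀ, ?_⟩
  calc A = (Aᵀ.submatrix id r * Y)ᵀ := by rw [← hY, transpose_transpose]
    _ = Yᵀ * A.submatrix r id := transpose_mul _ _

end Field

end Matrix

theorem cur_decomposition_of_generalized_inverse_general {m n k l : ℕ}
    (M : Matrix (Fin m) (Fin n) ℂ)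
    (rowIdx : Fin k → Fin m) (colIdx : Fin l → Fin n)
    (C : Matrix (Fin m) (Fin l) ℂ) (hC : C = M.submatrix id colIdx)
    (R : Matrix (Fin k) (Fin n) ℂ) (hR : R = M.submatrix rowIdx id)
    (G : Matrix (Fin k) (Fin l) ℂ) (hG : G = M.submatrix rowIdx colIdx)
    (hrank : G.rank = M.rank) :
    ∀ X : Matrix (Fin l) (Fin k) ℂ, G * X * G = G → M = C * X * R := by
  intro X hX
  have hGC : G = C.submatrix rowIdx id := by rw [hG, hC]; rfl
  have hGR : G = R.submatrix id colIdx := by rw [hG, hR]; rfl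
  have hrankC : M.rank ≤ C.rank := hrank ▸ hGC ▸ C.rank_submatrix_le rowIdx id
  have hrankR : M.rank ≤ R.rank := hrank ▸ hGR ▸ R.rank_submatrix_le id colIdx
  obtain ⟨Y, hY⟩ : ∃ Y, M = C * Y :=
    hC ▸ M.exists_eq_submatrix_mul_of_rank_le colIdx (hC ▸ hrankC)
  obtain ⟨Z, hZ⟩ : ∃ Z, M = Z * R :=
    hR ▸ M.exists_eq_mul_submatrix_of_rank_le rowIdx (hR ▸ hrankR)
  have hRGY : R = G * Y := by
    rw [hR, hY, hGC]
    exact submatrix_mul C Y rowIdx id id Function.bijective_id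
  have hCZG : C = Z * G := by
    rw [hC, hZ, hGR]
    exact submatrix_mul Z R id id colIdx Function.bijective_id
  calc M = Z * (G * X * G) * Y := by rw [hX, Matrix.mul_assoc, ← hRGY, hZ]
    _ = C * X * R := by rw [hCZG, hRGY]; simp only [Matrix.mul_assoc]

/-- **CUR decomposition via any generalized inverse.**  Let `M` be an `m×n` complex matrix,
let `C`, `R`, `G` be the submatrices of `M` given by a set of `l` columns, a set of `k` rows,
and their common entries, respectively.  If `rank G = rank M`, then for every generalized
inverse `X` of `G` (i.e. `G * X * G = G`) one has `M = C * X * R`. -/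
theorem cur_decomposition_of_generalized_inverse {m n k l : ℕ}
    (M : Matrix (Fin m) (Fin n) ℂ)
    (rowIdx : Fin k → Fin m) (colIdx : Fin l → Fin n)
    (hrow : Function.Injective rowIdx) (hcol : Function.Injective colIdx)
    (C : Matrix (Fin m) (Fin l) ℂ) (hC : C = M.submatrix id colIdx)
    (R : Matrix (Fin k) (Fin n) ℂ) (hR : R = M.submatrix rowIdx id)
    (G : Matrix (Fin k) (Fin l) ℂ) (hG : G = M.submatrix rowIdx colIdx)
    (hrank : G.rank = M.rank) :
    ∀ X : Matrix (Fin l) (Fin k) ℂ, G * X * G = G → M = C * X * R :=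
  cur_decomposition_of_generalized_inverse_general M rowIdx colIdx C hC R hR G hG hrank
end
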